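/- Let G₁ be an r₁-regular graph on n₁ ≥ 2 vertices (r₁ ≥ 1) and G₂ arbitrary on n₂ ≥ 1 vertices. Then the Laplacian spectrum of G₁ ⋆ G₂ consists of: r₁ + μᵢ(G₂) with multiplicity n₁ for each i = 2,…,n₂ (where 0 = μ₁(G₂) ≤ … ≤ μ_{n₂}(G₂) are the Laplacian eigenvalues of G₂), together with, for each Laplacian eigenvalue μⱼ(G₁) of G₁, the two values ((n₂+1)r₁ + μⱼ(G₁) ± √(((n₂+1)r₁ + μⱼ(G₁))² − 4μⱼ(G₁)((2n₂+1)r₁ − n₂μⱼ(G₁))))/2. -/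

import Mathlib

open Matrix Polynomial BigOperators

/-- The neighbourhood corona `G₁ ⋆ G₂` of two simple graphs. -/
def ncorona {V₁ V₂ : Type*} (G₁ : SimpleGraph V₁) (G₂ : SimpleGraph V₂) :
    SimpleGraph (V₁ ⊕ V₁ × V₂) where
  Adj := fun a b =>
    match a, b with
    | Sum.inl v, Sum.inl w => G₁.Adj v w
    | Sum.inl v, Sum.inr iu => G₁.Adj v iu.1
    | Sum.inr iu, Sum.inl w => G₁.Adj w iu.1
    | Sum.inr iu, Sum.inr jw => iu.1 = jw.1 ∧ G₂.Adj iu.2 jw.2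
  symm := by
    constructor
    rintro (v | ⟨i, u⟩) (w | ⟨j, z⟩) h
    · exact G₁.adj_symm h
    · exact h
    · exact h
    · exact ⟨h.1.symm, G₂.adj_symm h.2⟩
  loopless := by
    constructor
    rintro (v | ⟨i, u⟩) h
    · exact G₁.irrefl h
    · exact G₂.irrefl h.2

noncomputable instance {V₁ V₂ : Type*} (G₁ : SimpleGraph V₁) (G₂ : SimpleGraph V₂) :
    DecidableRel (ncorona G₁ G₂).Adj := Classical.decRel _

/-- The `M`-coronal `Γ_M(x) = 1ᵀ (xI - M)⁻¹ 1`, the sum of the entries of `(xI - M)⁻¹`. -/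
noncomputable def coronal {n : Type*} [Fintype n] [DecidableEq n]
    (M : Matrix n n ℝ) (x : ℝ) : ℝ :=
  ∑ i, ∑ j, (x • (1 : Matrix n n ℝ) - M)⁻¹ i j

/-!
Order the vertices of `G₁ ⋆ G₂` as `V₁ ⊕ V₁ × V₂` and put `t = x - r₁`. Then `xI - L(G₁ ⋆ G₂)` is
a 2 × 2 block matrix with lower-right block `I ⊗ (tI - L(G₂))`, and its off-diagonal blocks copy
`A(G₁)` onto every vertex of each copy of `G₂`. Since `L(G₂) 1 = 0`, the `L(G₂)`-coronal is
`n₂ / t`, so the Schur complement is `(x - (n₂ + 1) r₁) I + A₁ - (n₂ / t) A₁²`. As `G₁` is regular,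
`A₁ = r₁ I - L(G₁)`, so this is a polynomial in `L(G₁)` and its determinant is the product of that
polynomial over the eigenvalues `μⱼ(G₁)`. The factor `t` of `det (tI - L(G₂))` coming from
`μ₁(G₂) = 0` clears the denominators, leaving for each `μⱼ(G₁)` the quadratic
`x² - ((n₂ + 1) r₁ + μⱼ) x + μⱼ ((2n₂ + 1) r₁ - n₂ μⱼ)`, whose roots are the two stated values.
This gives the identity at all but finitely many `x`, hence as polynomials.
-/

open scoped Kronecker

namespace Matrix

variable {n K : Type*} [Fintype n] [DecidableEq n] [Field K] {m : ℕ}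

theorem card_eq_of_charpoly_eq_prod {A : Matrix n n K} {ν : Fin m → K}
    (hA : A.charpoly = ∏ j, (X - C (ν j))) : Fintype.card n = m := by
  have := congrArg natDegree hA
  rw [charpoly_natDegree_eq_dim, natDegree_prod _ _ fun j _ => X_sub_C_ne_zero (ν j)] at this
  simpa using this

theorem eval_charpoly_eq_det_smul_one_sub (A : Matrix n n K) (t : K) :
    A.charpoly.eval t = (t • 1 - A).det := by
  rw [eval_charpoly, scalar_apply, smul_one_eq_diagonal]

theorem det_sub_scalar_of_charpoly_eq_prod {A : Matrix n n K} {ν : Fin m → K}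
    (hA : A.charpoly = ∏ j, (X - C (ν j))) (ρ : K) :
    (A - scalar n ρ).det = ∏ j, (ν j - ρ) := by
  rw [← neg_sub, det_neg, ← eval_charpoly, hA, eval_prod, card_eq_of_charpoly_eq_prod hA,
    ← Fin.prod_const, ← Finset.prod_mul_distrib]
  simp

/- Both sides are multiplicative in `p`, and they agree on constants and on the linear factors
`X - C ρ` into which `p` splits. -/
theorem det_aeval_of_charpoly_eq_prod_of_isAlgClosed [IsAlgClosed K] {A : Matrix n n K}
    {ν : Fin m → K} (hA : A.charpoly = ∏ j, (X - C (ν j))) (p : K[X]) :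
    (aeval A p).det = ∏ j, p.eval (ν j) := by
  let φ : K[X] →* K := detMonoidHom.comp (aeval A).toMonoidHom
  let ψ : K[X] →* K := ∏ j, (evalRingHom (ν j)).toMonoidHom
  have hφ : ∀ q, φ q = (aeval A q).det := fun _ => rfl
  have hψ : ∀ q, ψ q = ∏ j, q.eval (ν j) := fun q => by simp [ψ]
  rw [← hφ, ← hψ, (IsAlgClosed.splits p).eq_prod_roots, map_mul, map_mul,
    map_multiset_prod, map_multiset_prod, Multiset.map_map, Multiset.map_map]
  congr 1
  · simp [hφ, hψ, Algebra.algebraMap_eq_smul_one, card_eq_of_charpoly_eq_prod hA]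
  · congr 1
    refine Multiset.map_congr rfl fun ρ _ => ?_
    simp only [Function.comp_apply, hφ, hψ, map_sub, aeval_X, aeval_C, eval_sub, eval_X, eval_C]
    exact det_sub_scalar_of_charpoly_eq_prod hA ρ

theorem det_aeval_of_charpoly_eq_prod {A : Matrix n n K} {ν : Fin m → K}
    (hA : A.charpoly = ∏ j, (X - C (ν j))) (p : K[X]) :
    (aeval A p).det = ∏ j, p.eval (ν j) := by
  let f := algebraMap K (AlgebraicClosure K)
  apply f.injective
  have hAf : (A.map f).charpoly = ∏ j, (X - C (f (ν j))) := by
    simp [charpoly_map, hA, Polynomial.map_prod]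
  have hdet := det_aeval_of_charpoly_eq_prod_of_isAlgClosed hAf (p.map f)
  rw [aeval_map_algebraMap] at hdet
  have hmap : (aeval A p).map f = aeval (A.map f) p :=
    (aeval_algHom_apply (Algebra.ofId K (AlgebraicClosure K)).mapMatrix A p).symm
  simp [RingHom.map_det, RingHom.mapMatrix_apply, hmap, hdet, eval_map]

theorem of_fst_mul_one_kronecker_mul_of_fst {R m n : Type*} [CommSemiring R]
    [Fintype m] [DecidableEq m] [Fintype n] (A A' : Matrix m m R) (N : Matrix n n R) :
    (of fun v (ju : m × n) => A v ju.1) * ((1 : Matrix m m R) ⊗ₖ N) *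
      (of fun (ju : m × n) w => A' ju.1 w) = (∑ u, ∑ z, N u z) • (A * A') := by
  ext v w
  simp only [mul_apply, of_apply, kroneckerMap_apply, one_apply, Fintype.sum_prod_type_right,
    smul_apply, smul_eq_mul, ite_mul, one_mul, zero_mul, mul_ite, mul_zero, Finset.sum_ite_eq',
    Finset.mem_univ, if_true, Finset.sum_mul, Finset.mul_sum]
  rw [Finset.sum_comm]
  refine Finset.sum_congr rfl fun j _ => ?_
  rw [Finset.sum_comm]
  exact Finset.sum_congr rfl fun u _ => Finset.sum_congr rfl fun z _ => by ring

end Matrix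

theorem coronal_of_mulVec_const_eq_zero {n : Type*} [Fintype n] [DecidableEq n]
    {M : Matrix n n ℝ} (hM : M *ᵥ (fun _ => 1) = 0) {t : ℝ} (ht : t ≠ 0)
    (hdet : IsUnit (t • 1 - M).det) : coronal M t = Fintype.card n / t := by
  have hone : (t • 1 - M) *ᵥ (t⁻¹ • fun _ => 1) = fun _ => 1 := by
    rw [mulVec_smul, sub_mulVec, hM, smul_mulVec, one_mulVec, sub_zero, smul_smul,
      inv_mul_cancel₀ ht, one_smul]
  have hinv : (t • 1 - M)⁻¹ *ᵥ (fun _ => 1) = t⁻¹ • fun _ => 1 := by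
    conv_lhs => rw [← hone, mulVec_mulVec, nonsing_inv_mul _ hdet, one_mulVec]
  simpa [coronal, mulVec, dotProduct, div_eq_mul_inv] using congrArg (fun v => ∑ i, v i) hinv

namespace SimpleGraph

theorem IsRegularOfDegree.adjMatrix_eq_smul_one_sub_lapMatrix {V R : Type*} [Fintype V]
    [DecidableEq V] [Ring R] {G : SimpleGraph V} [DecidableRel G.Adj] {d : ℕ}
    (hd : G.IsRegularOfDegree d) : G.adjMatrix R = (d : R) • 1 - G.lapMatrix R := by
  have hdeg : G.degMatrix R = (d : R) • 1 := by
    simp [degMatrix, hd.degree_eq, smul_one_eq_diagonal]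
  rw [lapMatrix, hdeg, sub_sub_cancel]

variable {V : Type*} [Fintype V] [DecidableEq V] (G : SimpleGraph V) [DecidableRel G.Adj]

theorem nonneg_of_isRoot_charpoly_lapMatrix {μ : ℝ} (hμ : (G.lapMatrix ℝ).charpoly.IsRoot μ) :
    0 ≤ μ :=
  (posSemidef_iff_isHermitian_and_spectrum_nonneg.mp (G.posSemidef_lapMatrix ℝ)).2
    (mem_spectrum_iff_isRoot_charpoly.mpr hμ)

theorem isRoot_charpoly_lapMatrix_zero [Nonempty V] : (G.lapMatrix ℝ).charpoly.IsRoot 0 := by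
  simp [IsRoot, eval_charpoly, det_neg, G.det_lapMatrix_eq_zero]

theorem lapMatrix_least_eigenvalue_eq_zero {n : ℕ} (hn : 0 < n) {μ : Fin n → ℝ}
    (hμ : Monotone μ) (hchar : (G.lapMatrix ℝ).charpoly = ∏ i, (X - C (μ i))) :
    μ ⟨0, hn⟩ = 0 := by
  have hroot : ∀ a, (G.lapMatrix ℝ).charpoly.IsRoot a ↔ ∃ i, μ i = a := fun a => by
    simp [hchar, IsRoot, eval_prod, Finset.prod_eq_zero_iff, sub_eq_zero, eq_comm (a := a)]
  have : Nonempty V := by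
    rw [← Fintype.card_pos_iff, card_eq_of_charpoly_eq_prod hchar]
    exact hn
  obtain ⟨i, hi⟩ := (hroot 0).mp G.isRoot_charpoly_lapMatrix_zero
  exact le_antisymm (hi ▸ hμ (Nat.zero_le i.val))
    (G.nonneg_of_isRoot_charpoly_lapMatrix ((hroot _).mpr ⟨_, rfl⟩))

theorem charpoly_lapMatrix_eq_X_mul_prod {n : ℕ} (hn : 0 < n) {μ : Fin n → ℝ}
    (hμ : Monotone μ) (hchar : (G.lapMatrix ℝ).charpoly = ∏ i, (X - C (μ i))) :
    (G.lapMatrix ℝ).charpoly =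
      X * ∏ i ∈ Finset.univ.filter (fun i : Fin n => i.val ≠ 0), (X - C (μ i)) := by
  have herase : Finset.univ.filter (fun i : Fin n => i.val ≠ 0) = Finset.univ.erase ⟨0, hn⟩ := by
    ext i
    simp [Fin.ext_iff]
  rw [hchar, herase, ← Finset.mul_prod_erase _ _ (Finset.mem_univ ⟨0, hn⟩),
    G.lapMatrix_least_eigenvalue_eq_zero hn hμ hchar, C_0, sub_zero]

end SimpleGraph

section

variable {V₁ V₂ : Type*} (G₁ : SimpleGraph V₁) (G₂ : SimpleGraph V₂)

@[simp] theorem ncorona_adj_inl_inl (v w : V₁) :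
    (ncorona G₁ G₂).Adj (Sum.inl v) (Sum.inl w) ↔ G₁.Adj v w := Iff.rfl

@[simp] theorem ncorona_adj_inl_inr (v : V₁) (ju : V₁ × V₂) :
    (ncorona G₁ G₂).Adj (Sum.inl v) (Sum.inr ju) ↔ G₁.Adj v ju.1 := Iff.rfl

@[simp] theorem ncorona_adj_inr_inl (ju : V₁ × V₂) (w : V₁) :
    (ncorona G₁ G₂).Adj (Sum.inr ju) (Sum.inl w) ↔ G₁.Adj w ju.1 := Iff.rfl

@[simp] theorem ncorona_adj_inr_inr (iu jw : V₁ × V₂) :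
    (ncorona G₁ G₂).Adj (Sum.inr iu) (Sum.inr jw) ↔ iu.1 = jw.1 ∧ G₂.Adj iu.2 jw.2 := Iff.rfl

variable [Fintype V₁] [Fintype V₂] [DecidableRel G₁.Adj]

theorem neighborFinset_ncorona_inl (v : V₁) :
    (ncorona G₁ G₂).neighborFinset (Sum.inl v) =
      (G₁.neighborFinset v).disjSum (G₁.neighborFinset v ×ˢ Finset.univ) := by
  ext (w | ⟨j, u⟩) <;> simp

theorem degree_ncorona_inl (v : V₁) :
    (ncorona G₁ G₂).degree (Sum.inl v) = G₁.degree v * (1 + Fintype.card V₂) := by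
  simp [← SimpleGraph.card_neighborFinset_eq_degree, neighborFinset_ncorona_inl,
    Finset.card_disjSum]
  ring

variable [DecidableRel G₂.Adj]

theorem neighborFinset_ncorona_inr (j : V₁) (u : V₂) :
    (ncorona G₁ G₂).neighborFinset (Sum.inr (j, u)) =
      (G₁.neighborFinset j).disjSum ({j} ×ˢ G₂.neighborFinset u) := by
  ext (w | ⟨i, z⟩) <;> simp [G₁.adj_comm, eq_comm, and_comm]

theorem degree_ncorona_inr (j : V₁) (u : V₂) :
    (ncorona G₁ G₂).degree (Sum.inr (j, u)) = G₁.degree j + G₂.degree u := by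
  simp [← SimpleGraph.card_neighborFinset_eq_degree, neighborFinset_ncorona_inr,
    Finset.card_disjSum]

variable [DecidableEq V₁] [DecidableEq V₂]

theorem smul_one_sub_lapMatrix_ncorona {R : Type*} [CommRing R] {r : ℕ}
    (hreg : G₁.IsRegularOfDegree r) (x : R) :
    x • 1 - (ncorona G₁ G₂).lapMatrix R = fromBlocks
      ((x - (1 + Fintype.card V₂) * r) • 1 + G₁.adjMatrix R)
      (of fun v (ju : V₁ × V₂) => G₁.adjMatrix R v ju.1)
      (of fun (ju : V₁ × V₂) w => G₁.adjMatrix R ju.1 w)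
      (1 ⊗ₖ ((x - r) • 1 - G₂.lapMatrix R)) := by
  ext (v | ⟨i, u⟩) (w | ⟨j, z⟩)
  · rcases eq_or_ne v w with rfl | h
    · simp [SimpleGraph.lapMatrix, SimpleGraph.degMatrix, degree_ncorona_inl, hreg.degree_eq]
      ring
    · simp [SimpleGraph.lapMatrix, SimpleGraph.degMatrix, one_apply, h]
  · simp [SimpleGraph.lapMatrix, SimpleGraph.degMatrix]
  · simp [SimpleGraph.lapMatrix, SimpleGraph.degMatrix, G₁.adj_comm]
  · rcases eq_or_ne i j with rfl | hij
    · rcases eq_or_ne u z with rfl | huz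
      · simp [SimpleGraph.lapMatrix, SimpleGraph.degMatrix, degree_ncorona_inr, hreg.degree_eq]
        ring
      · simp [SimpleGraph.lapMatrix, SimpleGraph.degMatrix, one_apply, huz]
    · simp [SimpleGraph.lapMatrix, SimpleGraph.degMatrix, one_apply, hij]

end

theorem sub_mul_sub_eq_quadratic {s a b : ℝ} (hD : 0 ≤ s ^ 2 - 4 * a * b) (x : ℝ) :
    (x - (s + √(s ^ 2 - 4 * a * b)) / 2) * (x - (s - √(s ^ 2 - 4 * a * b)) / 2) =
      x ^ 2 - s * x + a * b := by
  linear_combination (-1 / 4 : ℝ) * Real.sq_sqrt hD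

theorem ncorona_discrim_nonneg {n : ℝ} (hn : 0 ≤ n) (r μ : ℝ) :
    0 ≤ ((n + 1) * r + μ) ^ 2 - 4 * μ * ((2 * n + 1) * r - n * μ) := by
  have hsos : (4 * n + 1) * (((n + 1) * r + μ) ^ 2 - 4 * μ * ((2 * n + 1) * r - n * μ)) =
      ((4 * n + 1) * μ - (3 * n + 1) * r) ^ 2 + 4 * n ^ 3 * r ^ 2 := by ring
  have hpos : 0 < 4 * n + 1 := by linarith
  exact (mul_nonneg_iff_of_pos_left hpos).mp (hsos ▸ by positivity)

theorem eval_charpoly_ncorona {V₁ V₂ : Type*} [Fintype V₁] [Fintype V₂] [DecidableEq V₁]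
    [DecidableEq V₂] {G₁ : SimpleGraph V₁} (G₂ : SimpleGraph V₂) [DecidableRel G₁.Adj]
    [DecidableRel G₂.Adj] {r : ℕ} (hreg : G₁.IsRegularOfDegree r) {n₁ : ℕ}
    {μ : Fin n₁ → ℝ} (hchar : (G₁.lapMatrix ℝ).charpoly = ∏ j, (X - C (μ j))) {x : ℝ}
    (ht : x - r ≠ 0) (hM : IsUnit ((x - r) • 1 - G₂.lapMatrix ℝ).det) :
    (x - r) ^ n₁ * ((ncorona G₁ G₂).lapMatrix ℝ).charpoly.eval x =
      ((x - r) • 1 - G₂.lapMatrix ℝ).det ^ n₁ *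
        ∏ j, (x ^ 2 - ((Fintype.card V₂ + 1) * r + μ j) * x +
          μ j * ((2 * Fintype.card V₂ + 1) * r - Fintype.card V₂ * μ j)) := by
  set n₂ : ℝ := (Fintype.card V₂ : ℝ)
  set M := (x - r) • 1 - G₂.lapMatrix ℝ
  have : Invertible ((1 : Matrix V₁ V₁ ℝ) ⊗ₖ M) := invertibleOfIsUnitDet _ <| by
    rw [det_kronecker, det_one, one_pow, one_mul]
    exact hM.pow _
  have hcoronal : coronal (G₂.lapMatrix ℝ) (x - r) = n₂ / (x - r) :=
    coronal_of_mulVec_const_eq_zero G₂.lapMatrix_mulVec_const_eq_zero ht hM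
  let q : ℝ[X] := C (x - (1 + n₂) * r + r) - X - C (n₂ / (x - r)) * (C (r : ℝ) - X) ^ 2
  have hschur : ((x - (1 + n₂) * r) • 1 + G₁.adjMatrix ℝ) -
      coronal (G₂.lapMatrix ℝ) (x - r) • (G₁.adjMatrix ℝ * G₁.adjMatrix ℝ) =
      aeval (G₁.lapMatrix ℝ) q := by
    rw [hcoronal, hreg.adjMatrix_eq_smul_one_sub_lapMatrix]
    simp only [q, map_sub, map_mul, aeval_C, aeval_X, Algebra.algebraMap_eq_smul_one, sq,
      smul_mul_assoc, one_mul]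
    module
  rw [eval_charpoly_eq_det_smul_one_sub, smul_one_sub_lapMatrix_ncorona G₁ G₂ hreg,
    det_fromBlocks₂₂, invOf_eq_nonsing_inv, inv_kronecker, inv_one,
    of_fst_mul_one_kronecker_mul_of_fst, ← coronal, hschur, det_aeval_of_charpoly_eq_prod hchar,
    det_kronecker, det_one, one_pow, one_mul, card_eq_of_charpoly_eq_prod hchar, ← Fin.prod_const,
    mul_left_comm, ← Finset.prod_mul_distrib]
  congr 1
  refine Finset.prod_congr rfl fun j _ => ?_
  simp only [q, eval_sub, eval_mul, eval_pow, eval_C, eval_X]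
  field_simp
  ring

theorem ncorona_lap_spectrum_general {V₁ V₂ : Type*} [Fintype V₁] [Fintype V₂]
    [DecidableEq V₁] [DecidableEq V₂]
    (G₁ : SimpleGraph V₁) (G₂ : SimpleGraph V₂)
    [DecidableRel G₁.Adj] [DecidableRel G₂.Adj]
    (n₁ n₂ r₁ : ℕ)
    (hn₂ : 1 ≤ n₂) (hreg : G₁.IsRegularOfDegree r₁)
    (μ₁ : Fin n₁ → ℝ)
    (hchar₁ : (G₁.lapMatrix ℝ).charpoly = ∏ j, (Polynomial.X - Polynomial.C (μ₁ j)))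
    (μ₂ : Fin n₂ → ℝ) (hμ₂ : Monotone μ₂)
    (hchar₂ : (G₂.lapMatrix ℝ).charpoly = ∏ i, (Polynomial.X - Polynomial.C (μ₂ i))) :
    ((ncorona G₁ G₂).lapMatrix ℝ).charpoly =
      (∏ i ∈ Finset.univ.filter (fun i : Fin n₂ => i.val ≠ 0),
          (Polynomial.X - Polynomial.C ((r₁ : ℝ) + μ₂ i))) ^ n₁ *
        ∏ j : Fin n₁,
          ((Polynomial.X - Polynomial.C
              ((((n₂ : ℝ) + 1) * r₁ + μ₁ j
                + Real.sqrt ((((n₂ : ℝ) + 1) * r₁ + μ₁ j) ^ 2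
                  - 4 * μ₁ j * ((2 * (n₂ : ℝ) + 1) * r₁ - n₂ * μ₁ j))) / 2)) *
            (Polynomial.X - Polynomial.C
              ((((n₂ : ℝ) + 1) * r₁ + μ₁ j
                - Real.sqrt ((((n₂ : ℝ) + 1) * r₁ + μ₁ j) ^ 2
                  - 4 * μ₁ j * ((2 * (n₂ : ℝ) + 1) * r₁ - n₂ * μ₁ j))) / 2))) := by
  refine eq_of_infinite_eval_eq _ _ <|
    (Set.finite_range fun i => (r₁ : ℝ) + μ₂ i).infinite_compl.mono fun x hx => ?_
  have hx' : ∀ i, x - (r₁ + μ₂ i) ≠ 0 := fun i => sub_ne_zero.mpr fun h => hx ⟨i, h.symm⟩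
  have ht : x - r₁ ≠ 0 := by
    simpa [G₂.lapMatrix_least_eigenvalue_eq_zero hn₂ hμ₂ hchar₂] using hx' ⟨0, hn₂⟩
  have hdet := eval_charpoly_eq_det_smul_one_sub (G₂.lapMatrix ℝ) (x - r₁)
  simp only [G₂.charpoly_lapMatrix_eq_X_mul_prod hn₂ hμ₂ hchar₂, eval_mul, eval_X, eval_prod,
    eval_sub, eval_C, sub_sub] at hdet
  have hM : IsUnit ((x - r₁) • 1 - G₂.lapMatrix ℝ).det :=
    hdet ▸ (mul_ne_zero ht (Finset.prod_ne_zero_iff.mpr fun i _ => hx' i)).isUnit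
  have h := eval_charpoly_ncorona G₂ hreg hchar₁ ht hM
  rw [← hdet, mul_pow, mul_assoc, card_eq_of_charpoly_eq_prod hchar₂] at h
  simp only [Set.mem_ofPred_eq, eval_mul, eval_pow, eval_prod, eval_sub, eval_X, eval_C,
    mul_left_cancel₀ (pow_ne_zero _ ht) h]
  congr 1
  exact Finset.prod_congr rfl fun j _ =>
    (sub_mul_sub_eq_quadratic (ncorona_discrim_nonneg n₂.cast_nonneg _ _) x).symm

/-- Corollary 2.10: for `G₁` an `r₁`-regular graph on `n₁ ≥ 2` vertices and `G₂` arbitrary on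
`n₂ ≥ 1` vertices, the Laplacian spectrum of `G₁ ⋆ G₂` consists of `r₁ + μᵢ(G₂)` with
multiplicity `n₁` for each `i = 2, …, n₂`, together with, for each Laplacian eigenvalue
`μⱼ(G₁)`, the two values
`((n₂+1)r₁ + μⱼ(G₁) ± √(((n₂+1)r₁ + μⱼ(G₁))² - 4μⱼ(G₁)((2n₂+1)r₁ - n₂μⱼ(G₁))))/2`. -/
theorem ncorona_lap_spectrum {V₁ V₂ : Type*} [Fintype V₁] [Fintype V₂]
    [DecidableEq V₁] [DecidableEq V₂]
    (G₁ : SimpleGraph V₁) (G₂ : SimpleGraph V₂)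
    [DecidableRel G₁.Adj] [DecidableRel G₂.Adj]
    (n₁ n₂ r₁ : ℕ) (h₁ : Fintype.card V₁ = n₁) (h₂ : Fintype.card V₂ = n₂)
    (hn₁ : 2 ≤ n₁) (hn₂ : 1 ≤ n₂) (hr₁ : 1 ≤ r₁) (hreg : G₁.IsRegularOfDegree r₁)
    (μ₁ : Fin n₁ → ℝ) (hμ₁ : Monotone μ₁)
    (hchar₁ : (G₁.lapMatrix ℝ).charpoly = ∏ j, (Polynomial.X - Polynomial.C (μ₁ j)))
    (μ₂ : Fin n₂ → ℝ) (hμ₂ : Monotone μ₂)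
    (hchar₂ : (G₂.lapMatrix ℝ).charpoly = ∏ i, (Polynomial.X - Polynomial.C (μ₂ i))) :
    ((ncorona G₁ G₂).lapMatrix ℝ).charpoly =
      (∏ i ∈ Finset.univ.filter (fun i : Fin n₂ => i.val ≠ 0),
          (Polynomial.X - Polynomial.C ((r₁ : ℝ) + μ₂ i))) ^ n₁ *
        ∏ j : Fin n₁,
          ((Polynomial.X - Polynomial.C
              ((((n₂ : ℝ) + 1) * r₁ + μ₁ j
                + Real.sqrt ((((n₂ : ℝ) + 1) * r₁ + μ₁ j) ^ 2
                  - 4 * μ₁ j * ((2 * (n₂ : ℝ) + 1) * r₁ - n₂ * μ₁ j))) / 2)) *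
            (Polynomial.X - Polynomial.C
              ((((n₂ : ℝ) + 1) * r₁ + μ₁ j
                - Real.sqrt ((((n₂ : ℝ) + 1) * r₁ + μ₁ j) ^ 2
                  - 4 * μ₁ j * ((2 * (n₂ : ℝ) + 1) * r₁ - n₂ * μ₁ j))) / 2))) :=
  ncorona_lap_spectrum_general G₁ G₂ n₁ n₂ r₁ hn₂ hreg μ₁ hchar₁ μ₂ hμ₂ hchar₂
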